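/- arXiv:2112.04600 — 7 statements merged into one kernel-verified Lean document; each statement's English description precedes it below -/
import Mathlib

section
/- Let θ : B_E → L be a surjective join-preserving map with θ(∅)=0̂ and r : L → ℝ≥0 strictly order-preserving, submodular, with r(0̂)=0; set s = r∘θ. Then for subsets X, Y of E: the closures of X and Y with respect to the polymatroid s are equal if and only if θ(X) = θ(Y). -/
/-- The closure operator of a polymatroid. -/
def cl {E : Type*} (r : Set E → ℝ) (X : Set E) : Set E :=
  {e | r (X ∪ {e}) = r X}

/-!
Adding `e` to `X` changes `s = r ∘ θ` exactly when it changes `θ`, because `θ` is monotone and `r`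
is strictly monotone; so `e ∈ cl_s X` iff `θ {e} ≤ θ X`. Since `E` is finite and `θ` preserves
joins, `θ X` is the join of the `θ {e}` with `e ∈ X`, hence is recovered from that set of `e`.
-/

section JoinPreserving

variable {E L : Type*} [Lattice L] {θ : Set E → L}

theorem monotone_of_map_union (hjoin : ∀ X Y : Set E, θ (X ∪ Y) = θ X ⊔ θ Y) : Monotone θ :=
  fun X Y hXY => by
    rw [← Set.union_eq_right.2 hXY, hjoin]
    exact le_sup_left

theorem map_le_of_forall_map_singleton_le [Finite E]
    (hjoin : ∀ X Y : Set E, θ (X ∪ Y) = θ X ⊔ θ Y) {A B : Set E}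
    (h : ∀ e ∈ A, θ {e} ≤ θ B) : θ A ≤ θ B := by
  induction A, A.toFinite using Set.Finite.induction_on with
  | empty => exact monotone_of_map_union hjoin (Set.empty_subset B)
  | @insert a A _ _ ih =>
    rw [Set.insert_eq, hjoin]
    exact sup_le (h a (Set.mem_insert a A))
      (ih fun e he => h e (Set.mem_insert_of_mem a he))

theorem setOf_map_singleton_le_inj [Finite E]
    (hjoin : ∀ X Y : Set E, θ (X ∪ Y) = θ X ⊔ θ Y) {X Y : Set E} :
    {e | θ {e} ≤ θ X} = {e | θ {e} ≤ θ Y} ↔ θ X = θ Y := by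
  have hself : ∀ {A : Set E}, ∀ e ∈ A, θ {e} ≤ θ A := fun e he =>
    monotone_of_map_union hjoin (Set.singleton_subset_iff.2 he)
  refine ⟨fun hset => le_antisymm ?_ ?_, fun hXY => by rw [hXY]⟩
  · exact map_le_of_forall_map_singleton_le hjoin fun e he =>
      (hset ▸ hself e he : e ∈ {e | θ {e} ≤ θ Y})
  · exact map_le_of_forall_map_singleton_le hjoin fun e he =>
      (hset.symm ▸ hself e he : e ∈ {e | θ {e} ≤ θ X})

theorem StrictMono.map_sup_eq_iff {β : Type*} [Preorder β] {r : L → β} (hr : StrictMono r) {a b : L} :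
    r (a ⊔ b) = r a ↔ b ≤ a := by
  refine ⟨fun h => ?_, fun hba => by rw [sup_eq_left.2 hba]⟩
  by_contra hba
  exact (hr (left_lt_sup.2 hba)).ne' h

theorem mem_cl_comp_iff {r : L → ℝ} (hr : StrictMono r)
    (hjoin : ∀ X Y : Set E, θ (X ∪ Y) = θ X ⊔ θ Y) (A : Set E) (e : E) :
    e ∈ cl (fun Z => r (θ Z)) A ↔ θ {e} ≤ θ A := by
  simp only [cl, Set.mem_ofPred_eq, hjoin]
  exact hr.map_sup_eq_iff

end JoinPreserving

theorem closure_eq_iff_theta_eq_general {E L : Type*} [Fintype E]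
    [Lattice L]
    (θ : Set E → L)
    (hjoin : ∀ X Y : Set E, θ (X ∪ Y) = θ X ⊔ θ Y)
    (r : L → ℝ)
    (hrstrict : ∀ x y : L, x < y → r x < r y)
    (X Y : Set E) :
    cl (fun Z => r (θ Z)) X = cl (fun Z => r (θ Z)) Y ↔ θ X = θ Y := by
  have hcl : ∀ A, cl (fun Z => r (θ Z)) A = {e | θ {e} ≤ θ A} := fun A =>
    Set.ext (mem_cl_comp_iff (fun _ _ => hrstrict _ _) hjoin A)
  rw [hcl, hcl]
  exact setOf_map_singleton_le_inj hjoin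

/-- For the polymatroid `s = r ∘ θ`, the closures of two sets agree if and only
if their images under `θ` agree. -/
theorem closure_eq_iff_theta_eq {E L : Type*} [Fintype E]
    [Lattice L] [Fintype L] [OrderBot L]
    (θ : Set E → L) (hsurj : Function.Surjective θ)
    (hjoin : ∀ X Y : Set E, θ (X ∪ Y) = θ X ⊔ θ Y)
    (h0 : θ (∅ : Set E) = ⊥)
    (r : L → ℝ) (hrnn : ∀ x, 0 ≤ r x)
    (hrstrict : ∀ x y : L, x < y → r x < r y)
    (hrsub : ∀ x y : L, r (x ⊓ y) + r (x ⊔ y) ≤ r x + r y)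
    (hr0 : r ⊥ = 0)
    (X Y : Set E) :
    cl (fun Z => r (θ Z)) X = cl (fun Z => r (θ Z)) Y ↔ θ X = θ Y :=
  closure_eq_iff_theta_eq_general θ hjoin r hrstrict X Y
end

section
/- For every finite lattice L there exists a strictly order-preserving submodular function r : L → ℤ≥0 with r(0̂) = 0. -/
/-!
Take `r x` to be the number of elements not above `x`. Then `x < y` makes `x` itself a new
element not above `y`, the elements not above `x ⊔ y` are exactly those not above `x` or not
above `y`, and those not above `x ⊓ y` are among those not above both; submodularity is then
inclusion–exclusion.
-/

open Finset

section

variable {α : Type*} [Fintype α]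

def notAboveCount [LE α] [DecidableLE α] (x : α) : ℕ := #{z | ¬ x ≤ z}

@[simp]
theorem notAboveCount_bot [LE α] [DecidableLE α] [OrderBot α] : notAboveCount (⊥ : α) = 0 := by
  simp [notAboveCount]

theorem notAboveCount_strictMono [Preorder α] [DecidableLE α] :
    StrictMono (notAboveCount (α := α)) := by
  intro x y hxy
  refine card_lt_card <| (ssubset_iff_of_subset ?_).2 ⟨x, ?_, ?_⟩
  · exact monotone_filter_right _ fun z _ hxz hyz => hxz (hxy.le.trans hyz)
  · simpa using hxy.not_ge
  · simp

theorem notAboveCount_inf_add_sup_le [Lattice α] [DecidableLE α] (x y : α) :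
    notAboveCount (x ⊓ y) + notAboveCount (x ⊔ y) ≤ notAboveCount x + notAboveCount y := by
  classical
  set A : Finset α := {z | ¬ x ≤ z}
  set B : Finset α := {z | ¬ y ≤ z}
  have h_sup : ({z | ¬ x ⊔ y ≤ z} : Finset α) = A ∪ B := by
    ext z
    simp only [A, B, mem_filter, mem_univ, true_and, mem_union, sup_le_iff, not_and_or]
  have h_inf : ({z | ¬ x ⊓ y ≤ z} : Finset α) ⊆ A ∩ B := by
    intro z
    simp only [A, B, mem_filter, mem_univ, true_and, mem_inter]
    exact fun h => ⟨fun hx => h (inf_le_left.trans hx), fun hy => h (inf_le_right.trans hy)⟩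
  calc notAboveCount (x ⊓ y) + notAboveCount (x ⊔ y)
      ≤ #(A ∩ B) + #(A ∪ B) := by
        rw [notAboveCount, notAboveCount, h_sup]
        gcongr
    _ = #A + #B := by rw [add_comm, card_union_add_card_inter]

end

/-- Every finite lattice admits a strictly order-preserving submodular
function with nonnegative integer values sending the bottom element to `0`. -/
theorem exists_strict_submodular {L : Type*} [Lattice L] [Fintype L] [OrderBot L] :
    ∃ r : L → ℕ, r ⊥ = 0 ∧ (∀ x y : L, x < y → r x < r y) ∧
      (∀ x y : L, r (x ⊓ y) + r (x ⊔ y) ≤ r x + r y) := by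
  classical
  exact ⟨notAboveCount, notAboveCount_bot, fun _ _ h => notAboveCount_strictMono h,
    notAboveCount_inf_add_sup_le⟩
end

section
/- Let L be a finite lattice and define r(ℓ) = 1 − 2^(−k) where k is the length of the longest chain from 0̂ to ℓ. Then r is strictly order-preserving and submodular on L. -/
/-!
Extending a longest chain from `⊥` to `x` by one step shows that `k` is strictly monotone.
Submodularity is then a property of every strictly monotone `k : L → ℕ`:
for incomparable `x, y` both `k x` and `k y` exceed `k (x ⊓ y)`, so
`2^{-k x} + 2^{-k y} ≤ 2^{-k (x ⊓ y)}`, and the term `2^{-k (x ⊔ y)}` is positive.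
-/

section ChainLength

variable {α : Type*} [Preorder α] [OrderBot α]

def chainLengthsFromBot (a : α) : Set ℕ :=
  {n : ℕ | ∃ c : Fin (n + 1) → α, StrictMono c ∧ c 0 = ⊥ ∧ c (Fin.last n) = a}

lemma succ_mem_chainLengthsFromBot {a b : α} {n : ℕ} (hn : n ∈ chainLengthsFromBot a)
    (hab : a < b) : n + 1 ∈ chainLengthsFromBot b := by
  obtain ⟨c, hc, hc0, hcn⟩ := hn
  refine ⟨Fin.snoc c b, ?_, ?_, Fin.snoc_last _ _⟩
  · simpa only [Fin.insertNth_last'] using Fin.strictMono_insertNth_last hc b (hcn ▸ hab)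
  · simp [Fin.snoc, hc0]

lemma strictMono_of_isGreatest_chainLengthsFromBot {k : α → ℕ}
    (hk : ∀ a, IsGreatest (chainLengthsFromBot a) (k a)) : StrictMono k :=
  fun _ _ hab ↦ Nat.lt_of_succ_le <| (hk _).2 <| succ_mem_chainLengthsFromBot (hk _).1 hab

end ChainLength

lemma one_sub_two_zpow_neg_strictMono : StrictMono fun n : ℕ ↦ (1 : ℝ) - 2 ^ (-(n : ℤ)) :=
  fun _ _ h ↦ sub_lt_sub_left (zpow_lt_zpow_right₀ one_lt_two (by omega)) 1

lemma two_zpow_neg_add_two_zpow_neg_le {a b c : ℕ} (ha : c < a) (hb : c < b) :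
    (2 : ℝ) ^ (-(a : ℤ)) + 2 ^ (-(b : ℤ)) ≤ 2 ^ (-(c : ℤ)) :=
  calc (2 : ℝ) ^ (-(a : ℤ)) + 2 ^ (-(b : ℤ))
      ≤ 2 ^ (-(c : ℤ) - 1) + 2 ^ (-(c : ℤ) - 1) :=
        add_le_add (zpow_le_zpow_right₀ one_le_two (by omega))
          (zpow_le_zpow_right₀ one_le_two (by omega))
    _ = 2 ^ (-(c : ℤ)) := by
        rw [zpow_sub₀ two_ne_zero, zpow_one]; ring

lemma StrictMono.one_sub_two_zpow_neg_submodular {L : Type*} [Lattice L] {k : L → ℕ}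
    (hk : StrictMono k) (x y : L) :
    ((1 : ℝ) - 2 ^ (-(k (x ⊓ y) : ℤ))) + ((1 : ℝ) - 2 ^ (-(k (x ⊔ y) : ℤ)))
      ≤ ((1 : ℝ) - 2 ^ (-(k x : ℤ))) + ((1 : ℝ) - 2 ^ (-(k y : ℤ))) := by
  by_cases hxy : x ≤ y
  · rw [inf_eq_left.2 hxy, sup_eq_right.2 hxy]
  by_cases hyx : y ≤ x
  · rw [inf_eq_right.2 hyx, sup_eq_left.2 hyx, add_comm]
  have hsum := two_zpow_neg_add_two_zpow_neg_le (hk (inf_lt_left.2 hxy)) (hk (inf_lt_right.2 hyx))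
  have hpos : (0 : ℝ) < 2 ^ (-(k (x ⊔ y) : ℤ)) := zpow_pos two_pos _
  linarith

theorem chain_length_function_general {L : Type*} [Lattice L] [OrderBot L]
    (k : L → ℕ)
    (hk : ∀ ℓ : L, IsGreatest
      {n : ℕ | ∃ c : Fin (n + 1) → L, StrictMono c ∧ c 0 = ⊥ ∧ c (Fin.last n) = ℓ}
      (k ℓ)) :
    (∀ x y : L, x < y →
      (1 : ℝ) - (2 : ℝ) ^ (-(k x : ℤ)) < (1 : ℝ) - (2 : ℝ) ^ (-(k y : ℤ))) ∧
    (∀ x y : L,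
      ((1 : ℝ) - (2 : ℝ) ^ (-(k (x ⊓ y) : ℤ))) + ((1 : ℝ) - (2 : ℝ) ^ (-(k (x ⊔ y) : ℤ)))
        ≤ ((1 : ℝ) - (2 : ℝ) ^ (-(k x : ℤ))) + ((1 : ℝ) - (2 : ℝ) ^ (-(k y : ℤ)))) := by
  have hmono : StrictMono k := strictMono_of_isGreatest_chainLengthsFromBot hk
  exact ⟨fun _ _ h ↦ one_sub_two_zpow_neg_strictMono (hmono h),
    hmono.one_sub_two_zpow_neg_submodular⟩

/-- If `k ℓ` is the length of the longest chain from `⊥` to `ℓ` in a finite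
lattice `L`, then the function `ℓ ↦ 1 - 2 ^ (-(k ℓ))` is strictly
order-preserving and submodular. -/
theorem chain_length_function {L : Type*} [Lattice L] [Fintype L] [OrderBot L]
    (k : L → ℕ)
    (hk : ∀ ℓ : L, IsGreatest
      {n : ℕ | ∃ c : Fin (n + 1) → L, StrictMono c ∧ c 0 = ⊥ ∧ c (Fin.last n) = ℓ}
      (k ℓ)) :
    (∀ x y : L, x < y →
      (1 : ℝ) - (2 : ℝ) ^ (-(k x : ℤ)) < (1 : ℝ) - (2 : ℝ) ^ (-(k y : ℤ))) ∧
    (∀ x y : L,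
      ((1 : ℝ) - (2 : ℝ) ^ (-(k (x ⊓ y) : ℤ))) + ((1 : ℝ) - (2 : ℝ) ^ (-(k (x ⊔ y) : ℤ)))
        ≤ ((1 : ℝ) - (2 : ℝ) ^ (-(k x : ℤ))) + ((1 : ℝ) - (2 : ℝ) ^ (-(k y : ℤ)))) :=
  chain_length_function_general k hk
end

section
/- Let r be a polymatroid on E with associated join-preserving surjection θ onto its lattice of flats (induced by e ↦ cl({e})), and let X, Y ⊆ E be disjoint. Then the closure operator of the minor (r/X)∖Y equals the closure operator induced by the corresponding minor (θ/X)∖Y of θ, namely for Z₁, Z₂ ⊆ E∖(X∪Y), the closures of Z₁ and Z₂ under (r/X)∖Y agree if and only if θ(Z₁∪X) = θ(Z₂∪X). -/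
namespace Polymatroid

variable {E : Type*} {r : Set E → ℝ}

theorem subset_cl (A : Set E) : A ⊆ cl r A := fun e he => by
  rw [cl, Set.mem_ofPred_eq, Set.union_eq_left.mpr (Set.singleton_subset_iff.mpr he)]

theorem cl_mono (hmono : Monotone r)
    (hsub : ∀ X Y : Set E, r (X ∩ Y) + r (X ∪ Y) ≤ r X + r Y)
    {A A' : Set E} (hAA' : A ⊆ A') : cl r A ⊆ cl r A' := by
  intro e (he : r (A ∪ {e}) = r A)
  have hinter : r A ≤ r ((A ∪ {e}) ∩ A') :=
    hmono (Set.subset_inter Set.subset_union_left hAA')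
  have hunion : (A ∪ {e}) ∪ A' = A' ∪ {e} := by
    rw [Set.union_right_comm, Set.union_eq_right.mpr hAA']
  have hsub' := hsub (A ∪ {e}) A'
  rw [hunion] at hsub'
  exact le_antisymm (by linarith) (hmono Set.subset_union_left)

theorem rank_union_eq_of_subset_cl (hmono : Monotone r)
    (hsub : ∀ X Y : Set E, r (X ∩ Y) + r (X ∪ Y) ≤ r X + r Y)
    {A S : Set E} (hS : S.Finite) (hSA : S ⊆ cl r A) : r (A ∪ S) = r A := by
  induction S, hS using Set.Finite.induction_on with
  | empty => rw [Set.union_empty]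
  | @insert a s _ _ ih =>
    have has : a ∈ cl r (A ∪ s) :=
      cl_mono hmono hsub Set.subset_union_left (hSA (Set.mem_insert a s))
    calc r (A ∪ insert a s) = r ((A ∪ s) ∪ {a}) := by
          rw [Set.insert_eq, Set.union_left_comm, Set.union_comm {a}]
      _ = r (A ∪ s) := has
      _ = r A := ih ((Set.subset_insert a s).trans hSA)

theorem cl_eq_cl_of_subset_of_rank_eq (hmono : Monotone r)
    (hsub : ∀ X Y : Set E, r (X ∩ Y) + r (X ∪ Y) ≤ r X + r Y)
    {A B : Set E} (hAB : A ⊆ B) (hr : r A = r B) : cl r A = cl r B := by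
  refine (cl_mono hmono hsub hAB).antisymm fun e (he : r (B ∪ {e}) = r B) => ?_
  refine le_antisymm ?_ (hmono Set.subset_union_left)
  calc r (A ∪ {e}) ≤ r (B ∪ {e}) := hmono (Set.union_subset_union_left {e} hAB)
    _ = r A := he.trans hr.symm

theorem cl_eq_cl_of_subset_cl [Finite E] (hmono : Monotone r)
    (hsub : ∀ X Y : Set E, r (X ∩ Y) + r (X ∪ Y) ≤ r X + r Y)
    {A B : Set E} (hAB : A ⊆ cl r B) (hBA : B ⊆ cl r A) : cl r A = cl r B := by
  have hA : r (A ∪ B) = r A := rank_union_eq_of_subset_cl hmono hsub (Set.toFinite B) hBA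
  have hB : r (A ∪ B) = r B := by
    rw [Set.union_comm]; exact rank_union_eq_of_subset_cl hmono hsub (Set.toFinite A) hAB
  rw [cl_eq_cl_of_subset_of_rank_eq hmono hsub Set.subset_union_left hA.symm,
    cl_eq_cl_of_subset_of_rank_eq hmono hsub Set.subset_union_right hB.symm]

theorem setOf_minor_cl_eq (X S Z : Set E) :
    {e | e ∈ S ∧ r ((Z ∪ {e}) ∪ X) - r X = r (Z ∪ X) - r X} = S ∩ cl r (Z ∪ X) := by
  ext e
  simp only [Set.mem_ofPred_eq, Set.mem_inter_iff, cl, sub_left_inj, Set.union_right_comm Z {e} X]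

theorem subset_cl_of_inter_cl_eq {S Z₁ Z₂ X : Set E} (hZ₂ : Z₂ ⊆ S)
    (h : S ∩ cl r (Z₁ ∪ X) = S ∩ cl r (Z₂ ∪ X)) : Z₂ ∪ X ⊆ cl r (Z₁ ∪ X) := by
  refine Set.union_subset (fun e he => ?_) (Set.subset_union_right.trans (subset_cl _))
  have : e ∈ S ∩ cl r (Z₂ ∪ X) := ⟨hZ₂ he, subset_cl _ (Set.mem_union_left X he)⟩
  exact (h ▸ this).2

end Polymatroid

open Polymatroid in
theorem minor_closure_via_theta_general {E : Type*} [Fintype E] (r : Set E → ℝ)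
    (hmono : ∀ X Y : Set E, X ⊆ Y → r X ≤ r Y)
    (hsub : ∀ X Y : Set E, r (X ∩ Y) + r (X ∪ Y) ≤ r X + r Y)
    (X Y : Set E)
    (Z₁ Z₂ : Set E) (hZ₁ : Z₁ ⊆ (X ∪ Y)ᶜ) (hZ₂ : Z₂ ⊆ (X ∪ Y)ᶜ) :
    {e | e ∈ (X ∪ Y)ᶜ ∧ r ((Z₁ ∪ {e}) ∪ X) - r X = r (Z₁ ∪ X) - r X}
        = {e | e ∈ (X ∪ Y)ᶜ ∧ r ((Z₂ ∪ {e}) ∪ X) - r X = r (Z₂ ∪ X) - r X}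
      ↔ cl r (Z₁ ∪ X) = cl r (Z₂ ∪ X) := by
  have hmono' : Monotone r := fun A B hAB => hmono A B hAB
  rw [setOf_minor_cl_eq, setOf_minor_cl_eq]
  refine ⟨fun h => cl_eq_cl_of_subset_cl hmono' hsub ?_ ?_, fun h => h ▸ rfl⟩
  · exact subset_cl_of_inter_cl_eq hZ₁ h.symm
  · exact subset_cl_of_inter_cl_eq hZ₂ h

/-- For a polymatroid `r` on `E` with `θ(Z) = cl(Z)` and disjoint `X, Y ⊆ E`:
two sets have the same closure under the minor `(r/X)∖Y` if and only if
`cl(Z₁ ∪ X) = cl(Z₂ ∪ X)`. -/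
theorem minor_closure_via_theta {E : Type*} [Fintype E] (r : Set E → ℝ)
    (h0 : r ∅ = 0) (hnn : ∀ X, 0 ≤ r X)
    (hmono : ∀ X Y : Set E, X ⊆ Y → r X ≤ r Y)
    (hsub : ∀ X Y : Set E, r (X ∩ Y) + r (X ∪ Y) ≤ r X + r Y)
    (X Y : Set E) (hXY : Disjoint X Y)
    (Z₁ Z₂ : Set E) (hZ₁ : Z₁ ⊆ (X ∪ Y)ᶜ) (hZ₂ : Z₂ ⊆ (X ∪ Y)ᶜ) :
    {e | e ∈ (X ∪ Y)ᶜ ∧ r ((Z₁ ∪ {e}) ∪ X) - r X = r (Z₁ ∪ X) - r X}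
        = {e | e ∈ (X ∪ Y)ᶜ ∧ r ((Z₂ ∪ {e}) ∪ X) - r X = r (Z₂ ∪ X) - r X}
      ↔ cl r (Z₁ ∪ X) = cl r (Z₂ ∪ X) :=
  minor_closure_via_theta_general r hmono hsub X Y Z₁ Z₂ hZ₁ hZ₂
end

section
/- Let L be a finite geometric lattice, ℓ ∈ L, and ℓ₁,...,ℓ_k elements each covering ℓ. Then the set K = {ℓ ∨ ⋁_{i∈S} ℓ_i : S ⊆ {1,...,k}}, as a join-subsemilattice of L with induced order, is itself a lattice, and if x is covered by y in K then x is covered by y in L. -/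
/-!
Semimodularity, applied by induction on `S`, shows that `ℓ ⊔ S.sup f ⊔ f i` covers
`ℓ ⊔ S.sup f` whenever `f i` is not already below it. So if `x < y` in `K`, some generator
`f i ≤ y` is not below `x`, and `x ⊔ f i ∈ K` is a cover of `x` in `L` lying below `y`; if `y`
covers `x` in `K`, this element must be `y`. Meets in `K` are generated by the `f i` below
both elements.
-/

theorem sup_finset_sup_sup_eq_insert {α ι : Type*} [SemilatticeSup α] [OrderBot α]
    [DecidableEq ι] (x : α) (f : ι → α) (S : Finset ι) (i : ι) :
    x ⊔ S.sup f ⊔ f i = x ⊔ (insert i S).sup f := by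
  rw [Finset.sup_insert, sup_comm (f i), sup_assoc]

section CovBy

variable {α : Type*} [Lattice α] [IsWeakUpperModularLattice α]

theorem covBy_sup_sup_of_covBy_sup {x a b : α} (ha : x ⋖ x ⊔ a) (hb : x ⋖ x ⊔ b)
    (hba : ¬ b ≤ x ⊔ a) : x ⊔ a ⋖ x ⊔ a ⊔ b := by
  have hinf : (x ⊔ a) ⊓ (x ⊔ b) = x := by
    refine (hb.eq_or_eq (le_inf le_sup_left le_sup_left) inf_le_right).resolve_right fun h => ?_
    exact hba (le_sup_right.trans (h ▸ inf_le_left))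
  have hcov := covBy_sup_of_inf_covBy_of_inf_covBy_left (by rwa [hinf]) (by rwa [hinf])
  rwa [sup_sup_sup_comm, sup_idem, ← sup_assoc] at hcov

theorem covBy_sup_finset_sup_sup [OrderBot α] {ι : Type*} {x : α} {f : ι → α}
    (hf : ∀ i, x ⋖ x ⊔ f i) (S : Finset ι) {i : ι} (hi : ¬ f i ≤ x ⊔ S.sup f) :
    x ⊔ S.sup f ⋖ x ⊔ S.sup f ⊔ f i := by
  classical
  induction S using Finset.induction_on generalizing i with
  | empty => simpa using hf i
  | @insert j S _ ih =>
    rw [← sup_finset_sup_sup_eq_insert x f S j] at hi ⊢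
    by_cases hj : f j ≤ x ⊔ S.sup f
    · rw [sup_eq_left.mpr hj] at hi ⊢
      exact ih hi
    · exact covBy_sup_sup_of_covBy_sup (ih hj) (ih fun h => hi (h.trans le_sup_left)) hi

end CovBy

section JoinSpan

variable {α ι : Type*}

def joinSpan [SemilatticeSup α] [OrderBot α] (ℓ : α) (f : ι → α) : Set α :=
  {x | ∃ S : Finset ι, x = ℓ ⊔ S.sup f}

theorem sup_mem_joinSpan [SemilatticeSup α] [OrderBot α] {ℓ x y : α} {f : ι → α}
    (hx : x ∈ joinSpan ℓ f) (hy : y ∈ joinSpan ℓ f) : x ⊔ y ∈ joinSpan ℓ f := by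
  classical
  obtain ⟨Sx, rfl⟩ := hx
  obtain ⟨Sy, rfl⟩ := hy
  exact ⟨Sx ∪ Sy, by rw [Finset.sup_union, ← sup_sup_sup_comm, sup_idem]⟩

theorem sup_finset_sup_le_iff [SemilatticeSup α] [OrderBot α] {ℓ y : α} {f : ι → α}
    {S : Finset ι} (hℓ : ℓ ≤ y) : ℓ ⊔ S.sup f ≤ y ↔ ∀ i ∈ S, f i ≤ y := by
  rw [sup_le_iff, Finset.sup_le_iff]
  exact and_iff_right hℓ

theorem exists_glb_mem_joinSpan [SemilatticeSup α] [OrderBot α] [Fintype ι] {ℓ x y : α}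
    {f : ι → α} (hx : x ∈ joinSpan ℓ f) (hy : y ∈ joinSpan ℓ f) :
    ∃ m ∈ joinSpan ℓ f, m ≤ x ∧ m ≤ y ∧ ∀ z ∈ joinSpan ℓ f, z ≤ x → z ≤ y → z ≤ m := by
  classical
  obtain ⟨Sx, rfl⟩ := hx
  obtain ⟨Sy, rfl⟩ := hy
  set T := Finset.univ.filter fun i => f i ≤ ℓ ⊔ Sx.sup f ∧ f i ≤ ℓ ⊔ Sy.sup f
  refine ⟨ℓ ⊔ T.sup f, ⟨T, rfl⟩, ?_, ?_, ?_⟩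
  · exact (sup_finset_sup_le_iff le_sup_left).2 fun i hi => (Finset.mem_filter.1 hi).2.1
  · exact (sup_finset_sup_le_iff le_sup_left).2 fun i hi => (Finset.mem_filter.1 hi).2.2
  · rintro z ⟨Sz, rfl⟩ hzx hzy
    refine (sup_finset_sup_le_iff le_sup_left).2 fun i hi => ?_
    have hiz : f i ≤ ℓ ⊔ Sz.sup f := (Finset.le_sup hi).trans le_sup_right
    have hiT : i ∈ T := Finset.mem_filter.2 ⟨Finset.mem_univ i, hiz.trans hzx, hiz.trans hzy⟩
    exact (Finset.le_sup hiT).trans le_sup_right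

theorem covBy_of_forall_mem_joinSpan_not_between [Lattice α] [OrderBot α]
    [IsWeakUpperModularLattice α] {ℓ x y : α} {f : ι → α} (hf : ∀ i, ℓ ⋖ ℓ ⊔ f i)
    (hx : x ∈ joinSpan ℓ f) (hy : y ∈ joinSpan ℓ f) (hxy : x < y)
    (hbetween : ∀ z ∈ joinSpan ℓ f, ¬(x < z ∧ z < y)) : x ⋖ y := by
  classical
  obtain ⟨Sx, rfl⟩ := hx
  obtain ⟨Sy, rfl⟩ := hy
  obtain ⟨i, hiSy, hix⟩ : ∃ i ∈ Sy, ¬ f i ≤ ℓ ⊔ Sx.sup f := by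
    by_contra! h
    exact hxy.not_ge ((sup_finset_sup_le_iff le_sup_left).2 h)
  have hcov := covBy_sup_finset_sup_sup hf Sx hix
  have hle : ℓ ⊔ Sx.sup f ⊔ f i ≤ ℓ ⊔ Sy.sup f :=
    sup_le hxy.le ((Finset.le_sup hiSy).trans le_sup_right)
  have hmem : ℓ ⊔ Sx.sup f ⊔ f i ∈ joinSpan ℓ f :=
    ⟨insert i Sx, sup_finset_sup_sup_eq_insert ℓ f Sx i⟩
  have heq : ℓ ⊔ Sx.sup f ⊔ f i = ℓ ⊔ Sy.sup f :=
    hle.eq_of_not_lt fun hlt => hbetween _ hmem ⟨hcov.lt, hlt⟩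
  rwa [← heq]

end JoinSpan

theorem geometric_minor_lattice_general {L : Type*} [Lattice L] [OrderBot L]
    (hsemimod : ∀ x y : L, x ⊓ y ⋖ x → x ⊓ y ⋖ y → (x ⋖ x ⊔ y ∧ y ⋖ x ⊔ y))
    (k : ℕ) (ℓ : L) (f : Fin k → L) (hf : ∀ i, ℓ ⋖ f i) :
    (∀ x ∈ {x : L | ∃ S : Finset (Fin k), x = ℓ ⊔ S.sup f},
     ∀ y ∈ {x : L | ∃ S : Finset (Fin k), x = ℓ ⊔ S.sup f},
      -- joins of K are joins of L, so K is a join-subsemilattice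
      x ⊔ y ∈ {x : L | ∃ S : Finset (Fin k), x = ℓ ⊔ S.sup f}) ∧
    (∀ x ∈ {x : L | ∃ S : Finset (Fin k), x = ℓ ⊔ S.sup f},
     ∀ y ∈ {x : L | ∃ S : Finset (Fin k), x = ℓ ⊔ S.sup f},
      -- any two elements of K have a greatest lower bound within K
      ∃ m ∈ {x : L | ∃ S : Finset (Fin k), x = ℓ ⊔ S.sup f},
        m ≤ x ∧ m ≤ y ∧
        ∀ z ∈ {x : L | ∃ S : Finset (Fin k), x = ℓ ⊔ S.sup f},
          z ≤ x → z ≤ y → z ≤ m) ∧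
    (∀ x ∈ {x : L | ∃ S : Finset (Fin k), x = ℓ ⊔ S.sup f},
     ∀ y ∈ {x : L | ∃ S : Finset (Fin k), x = ℓ ⊔ S.sup f},
      -- covers in K are covers in L
      x < y → (∀ z ∈ {x : L | ∃ S : Finset (Fin k), x = ℓ ⊔ S.sup f},
        ¬(x < z ∧ z < y)) → x ⋖ y) := by
  have : IsWeakUpperModularLattice L := ⟨fun ha hb => (hsemimod _ _ ha hb).1⟩
  have hf' : ∀ i, ℓ ⋖ ℓ ⊔ f i := fun i => by rw [sup_eq_right.2 (hf i).le]; exact hf i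
  exact ⟨fun _ hx _ hy => sup_mem_joinSpan hx hy,
    fun _ hx _ hy => exists_glb_mem_joinSpan hx hy,
    fun _ hx _ hy => covBy_of_forall_mem_joinSpan_not_between hf' hx hy⟩

/-- In a finite geometric lattice `L`, for elements `ℓ₁, …, ℓ_k` covering `ℓ`,
the join-subsemilattice `K = {ℓ ⊔ ⋁_{i ∈ S} ℓᵢ : S ⊆ {1,…,k}}` is a lattice
under the induced order, and covers in `K` are covers in `L`. -/
theorem geometric_minor_lattice {L : Type*} [Lattice L] [Fintype L] [OrderBot L]
    (hatomistic : ∀ x : L, ∃ s : Finset L, (∀ a ∈ s, IsAtom a) ∧ x = s.sup id)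
    (hsemimod : ∀ x y : L, x ⊓ y ⋖ x → x ⊓ y ⋖ y → (x ⋖ x ⊔ y ∧ y ⋖ x ⊔ y))
    (k : ℕ) (ℓ : L) (f : Fin k → L) (hf : ∀ i, ℓ ⋖ f i) :
    (∀ x ∈ {x : L | ∃ S : Finset (Fin k), x = ℓ ⊔ S.sup f},
     ∀ y ∈ {x : L | ∃ S : Finset (Fin k), x = ℓ ⊔ S.sup f},
      -- joins of K are joins of L, so K is a join-subsemilattice
      x ⊔ y ∈ {x : L | ∃ S : Finset (Fin k), x = ℓ ⊔ S.sup f}) ∧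
    (∀ x ∈ {x : L | ∃ S : Finset (Fin k), x = ℓ ⊔ S.sup f},
     ∀ y ∈ {x : L | ∃ S : Finset (Fin k), x = ℓ ⊔ S.sup f},
      -- any two elements of K have a greatest lower bound within K
      ∃ m ∈ {x : L | ∃ S : Finset (Fin k), x = ℓ ⊔ S.sup f},
        m ≤ x ∧ m ≤ y ∧
        ∀ z ∈ {x : L | ∃ S : Finset (Fin k), x = ℓ ⊔ S.sup f},
          z ≤ x → z ≤ y → z ≤ m) ∧
    (∀ x ∈ {x : L | ∃ S : Finset (Fin k), x = ℓ ⊔ S.sup f},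
     ∀ y ∈ {x : L | ∃ S : Finset (Fin k), x = ℓ ⊔ S.sup f},
      -- covers in K are covers in L
      x < y → (∀ z ∈ {x : L | ∃ S : Finset (Fin k), x = ℓ ⊔ S.sup f},
        ¬(x < z ∧ z < y)) → x ⋖ y) :=
  geometric_minor_lattice_general hsemimod k ℓ f hf
end

section
/- Let P be a finite poset, L its lattice of lower order ideals, J a lower order ideal of P, and I ⊆ P disjoint from J. Then the set of lower order ideals of P that contain J and all of whose maximal elements lie in I ∪ J, ordered by inclusion, is a lattice isomorphic to the lattice of lower order ideals of the induced subposet I. -/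
/-!
The isomorphism is `Λ ↦ Λ ∩ I`, with inverse `S ↦ J ∪ ↓S`. Since `P` is finite, every element
of an ideal `Λ` lies below a maximal element of `Λ`, which is in `I` or in the lower set `J`;
hence `Λ = J ∪ ↓(Λ ∩ I)`. Conversely `(J ∪ ↓S) ∩ I = S` because `I` misses `J` and `S` is an
ideal of `I`, and the maximal elements of `J ∪ ↓S` outside `J` belong to `S`. Both maps are
monotone, so this bijection is an order isomorphism.
-/

open Set

section Preorder

variable {P : Type*} [Preorder P] {I J Λ S : Set P}

theorem mem_or_mem_lowerClosure_inter_of_maximal_mem [Finite P] (hJ : IsLowerSet J)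
    (hmax : ∀ m ∈ Λ, (∀ x ∈ Λ, ¬ m < x) → m ∈ I ∪ J) {a : P} (ha : a ∈ Λ) :
    a ∈ J ∨ a ∈ lowerClosure (Λ ∩ I) := by
  obtain ⟨m, ham, hm⟩ := Finite.exists_le_maximal (p := (· ∈ Λ)) ha
  rcases hmax m hm.1 fun x hx hlt => hlt.not_ge (hm.2 hx hlt.le) with hmI | hmJ
  · exact Or.inr (mem_lowerClosure.2 ⟨m, ⟨hm.1, hmI⟩, ham⟩)
  · exact Or.inl (hJ ham hmJ)

theorem union_lowerClosure_inter_eq_of_maximal_mem [Finite P] (hΛ : IsLowerSet Λ)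
    (hJ : IsLowerSet J) (hJΛ : J ⊆ Λ) (hmax : ∀ m ∈ Λ, (∀ x ∈ Λ, ¬ m < x) → m ∈ I ∪ J) :
    J ∪ lowerClosure (Λ ∩ I) = Λ :=
  (union_subset hJΛ (lowerClosure_min inter_subset_left hΛ)).antisymm
    fun _ ha => mem_or_mem_lowerClosure_inter_of_maximal_mem hJ hmax ha

theorem union_lowerClosure_inter_eq (hIJ : Disjoint I J)
    (hS : ∀ a b : P, a ∈ I → b ∈ S → a ≤ b → a ∈ S) (hSI : S ⊆ I) :
    (J ∪ lowerClosure S) ∩ I = S := by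
  refine subset_antisymm ?_ fun a ha => ⟨Or.inr (subset_lowerClosure ha), hSI ha⟩
  rintro a ⟨haJ | haS, haI⟩
  · exact absurd haJ (disjoint_left.1 hIJ haI)
  · obtain ⟨b, hbS, hab⟩ := mem_lowerClosure.1 haS
    exact hS a b haI hbS hab

end Preorder

theorem mem_of_maximal_mem_union_lowerClosure {P : Type*} [PartialOrder P] {J S : Set P}
    {m : P} (hm : m ∈ J ∪ lowerClosure S) (hmax : ∀ x ∈ J ∪ lowerClosure S, ¬ m < x) :
    m ∈ S ∪ J := by
  rcases hm with hmJ | hmS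
  · exact Or.inr hmJ
  · obtain ⟨b, hbS, hmb⟩ := mem_lowerClosure.1 hmS
    obtain rfl : m = b := hmb.eq_of_not_lt (hmax b (Or.inr (subset_lowerClosure hbS)))
    exact Or.inl hbS

/-- Let `P` be a finite poset, `J` a lower order ideal of `P` and `I ⊆ P`
disjoint from `J`. The lower order ideals of `P` containing `J` all of whose
maximal elements lie in `I ∪ J`, ordered by inclusion, form a lattice
isomorphic to the lattice of lower order ideals of the induced subposet `I`. -/
theorem order_minor_iso {P : Type*} [PartialOrder P] [Fintype P]
    (I J : Set P)
    (hJ : ∀ a b : P, a ≤ b → b ∈ J → a ∈ J)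
    (hIJ : Disjoint I J) :
    Nonempty
      (({Λ : Set P // (∀ a b : P, a ≤ b → b ∈ Λ → a ∈ Λ) ∧ J ⊆ Λ ∧
          ∀ m ∈ Λ, (∀ x ∈ Λ, ¬ m < x) → m ∈ I ∪ J})
        ≃o
       ({S : Set P // S ⊆ I ∧ ∀ a b : P, a ∈ I → b ∈ S → a ≤ b → a ∈ S})) := by
  have hJ' : IsLowerSet J := fun b a hab hb => hJ a b hab hb
  let e : {Λ : Set P // (∀ a b : P, a ≤ b → b ∈ Λ → a ∈ Λ) ∧ J ⊆ Λ ∧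
          ∀ m ∈ Λ, (∀ x ∈ Λ, ¬ m < x) → m ∈ I ∪ J} ≃
      {S : Set P // S ⊆ I ∧ ∀ a b : P, a ∈ I → b ∈ S → a ≤ b → a ∈ S} :=
    { toFun := fun Λ =>
        ⟨Λ.1 ∩ I, inter_subset_right, fun a b haI hb hab => ⟨Λ.2.1 a b hab hb.1, haI⟩⟩
      invFun := fun S =>
        ⟨J ∪ lowerClosure S.1, fun a b hab hb => hJ'.union (lowerClosure S.1).lower hab hb,
          subset_union_left, fun m hm hmax =>
            (mem_of_maximal_mem_union_lowerClosure hm hmax).imp_left fun h => S.2.1 h⟩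
      left_inv := fun Λ => Subtype.ext <|
        union_lowerClosure_inter_eq_of_maximal_mem (fun b a hab hb => Λ.2.1 a b hab hb) hJ'
          Λ.2.2.1 Λ.2.2.2
      right_inv := fun S => Subtype.ext (union_lowerClosure_inter_eq hIJ S.2.2 S.2.1) }
  exact ⟨e.toOrderIso (fun _ _ h => inter_subset_inter_left I h)
    fun _ _ h => union_subset_union_right J (lowerClosure_mono h)⟩
end

section
/- Let L be a finite lattice with join-irreducibles generating it, G a generating set of L under join (G ⊆ L∖{0̂}, every element a join of a subset of G, with empty join 0̂). Every minor of (L,G) can be written as a contraction followed by a deletion: if (K,H) is obtained from (L,G) by any finite sequence of contractions and deletions, then K = { 0̂_K ∨ ⋁_{h∈S} h : S ⊆ H } where 0̂_K is the minimum of K and each element of H has the form 0̂_K ∨ g for some g ∈ G. -/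
/-- A generator enriched lattice inside an ambient lattice `L` is represented
by a pair `(z, H)`: its minimal element `z` and its generating set `H`; its
element set is `{z ⊔ ⋁ S : S ⊆ H}`. A single deletion or contraction step. -/
inductive MinorStep {L : Type*} [Lattice L] [OrderBot L] :
    L × Set L → L × Set L → Prop
  | del (z : L) (H I : Set L) (hI : I ⊆ H) :
      MinorStep (z, H) (z, H \ I)
  | contr (z : L) (H : Set L) (S : Finset L) (hS : ↑S ⊆ H) :
      MinorStep (z, H)
        (z ⊔ S.sup id,
         {x | ∃ g ∈ H, x = g ⊔ (z ⊔ S.sup id)} \ {z ⊔ S.sup id})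

/-!
Being "a contraction of `(L, G)` followed by a deletion" is invariant under both minor operations.
A deletion only shrinks the generating set. Contracting such a minor with bottom `z` by generators
`z ⊔ gₛ` is the same as contracting `(L, G)` by `z` together with the `gₛ`, and a generator
`(z ⊔ g) ⊔ z'` of the result, where `z ≤ z'`, is just `z' ⊔ g`.
-/

theorem exists_sup_finset_sup_eq_of_forall_eq_sup {α : Type*} [SemilatticeSup α] [OrderBot α]
    {G : Set α} {z : α} (S : Finset α)
    (hS : ∀ s ∈ S, ∃ g ∈ G, s = z ⊔ g) :
    ∃ T : Finset α, ↑T ⊆ G ∧ z ⊔ S.sup id = z ⊔ T.sup id := by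
  classical
  induction S using Finset.induction_on with
  | empty => exact ⟨∅, by simp, rfl⟩
  | insert a S _ ih =>
    obtain ⟨T, hTG, hT⟩ := ih fun s hs => hS s (Finset.mem_insert_of_mem hs)
    obtain ⟨g, hgG, rfl⟩ := hS _ (Finset.mem_insert_self _ _)
    refine ⟨insert g T, by simpa using Set.insert_subset hgG hTG, ?_⟩
    calc z ⊔ (insert (z ⊔ g) S).sup id = g ⊔ (z ⊔ S.sup id) := by
          rw [Finset.sup_insert, id, ← sup_assoc, ← sup_assoc, sup_idem, sup_left_comm, sup_assoc]
      _ = z ⊔ (insert g T).sup id := by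
          rw [hT, Finset.sup_insert, id, sup_left_comm]

section

variable {L : Type*} [Lattice L] [OrderBot L]

def IsContractionDeletion (G : Set L) (p : L × Set L) : Prop :=
  (∃ S : Finset L, ↑S ⊆ G ∧ p.1 = S.sup id) ∧ ∀ h ∈ p.2, ∃ g ∈ G, h = p.1 ⊔ g

namespace IsContractionDeletion

variable {G : Set L}

theorem bot : IsContractionDeletion G (⊥, G) :=
  ⟨⟨∅, by simp, rfl⟩, fun h hh => ⟨h, hh, (bot_sup_eq h).symm⟩⟩

theorem minorStep {p q : L × Set L} (hp : IsContractionDeletion G p) (hpq : MinorStep p q) :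
    IsContractionDeletion G q := by
  classical
  obtain ⟨⟨S₀, hS₀G, hz⟩, hgen⟩ := hp
  cases hpq with
  | del z H I _ => exact ⟨⟨S₀, hS₀G, hz⟩, fun h hh => hgen h hh.1⟩
  | contr z H S hSH =>
    obtain ⟨T, hTG, hT⟩ :=
      exists_sup_finset_sup_eq_of_forall_eq_sup S fun s hs => hgen s (hSH hs)
    refine ⟨⟨S₀ ∪ T, by simpa using ⟨hS₀G, hTG⟩, ?_⟩, ?_⟩
    · simp only at hz ⊢
      rw [hT, hz, Finset.sup_union]
    · rintro _ ⟨⟨g, hg, rfl⟩, -⟩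
      obtain ⟨g₀, hg₀G, rfl⟩ := hgen g hg
      exact ⟨g₀, hg₀G, by rw [sup_right_comm, sup_eq_right.2 le_sup_left]⟩

theorem of_reflTransGen {p : L × Set L} (hp : Relation.ReflTransGen MinorStep (⊥, G) p) :
    IsContractionDeletion G p := by
  induction hp with
  | refl => exact bot
  | tail _ hstep ih => exact ih.minorStep hstep

end IsContractionDeletion

end

theorem minor_contraction_then_deletion_general {L : Type*} [Lattice L]
    [OrderBot L] (G : Set L)
    (z : L) (H : Set L)
    (hminor : Relation.ReflTransGen MinorStep ((⊥ : L), G) (z, H)) :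
    (∃ S : Finset L, ↑S ⊆ G ∧ z = S.sup id) ∧
    (∀ h ∈ H, ∃ g ∈ G, h = z ⊔ g) :=
  IsContractionDeletion.of_reflTransGen hminor

/-- Every minor of a generator enriched lattice `(L, G)` is a contraction
followed by a deletion: if `(K, H)` is a minor with minimal element `z = 0̂_K`,
then `z` is a join of a subset of `G` and every generator `h ∈ H` has the
form `z ⊔ g` for some `g ∈ G` (so the element set of the minor is
`{z ⊔ ⋁_{h ∈ S} h : S ⊆ H}`, a minor obtained from `(L,G)` by contracting
by `z` and then restricting to `H`). -/
theorem minor_contraction_then_deletion {L : Type*} [Lattice L] [Fintype L]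
    [OrderBot L] (G : Set L) (hG0 : (⊥ : L) ∉ G)
    (hGgen : ∀ x : L, ∃ S : Finset L, ↑S ⊆ G ∧ x = S.sup id)
    (z : L) (H : Set L)
    (hminor : Relation.ReflTransGen MinorStep ((⊥ : L), G) (z, H)) :
    (∃ S : Finset L, ↑S ⊆ G ∧ z = S.sup id) ∧
    (∀ h ∈ H, ∃ g ∈ G, h = z ⊔ g) :=
  minor_contraction_then_deletion_general G z H hminor
end
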